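/- The maps α and β satisfy the matched-pair compatibility conditions for β: for all h, h' ∈ H and a ∈ A, β(1_H ⊗ a) = ε_A(a)·1_H, β(h h' ⊗ a) = Σ β(h ⊗ α(h'₁ ⊗ a₁))·β(h'₂ ⊗ a₂), and moreover Σ β(h₁ ⊗ a₁) ⊗ α(h₂ ⊗ a₂) = Σ β(h₂ ⊗ a₂) ⊗ α(h₁ ⊗ a₁) in H ⊗ A. -/
import Mathlib


open TensorProduct

noncomputable section

universe u

variable {k A H X : Type u} [Field k]
  [Ring A] [Ring H] [Ring X]
  [Bialgebra k A] [Bialgebra k H] [Bialgebra k X]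

/-- ζ : H ⊗ A → A ⊗ H, ζ(h ⊗ a) = ξ⁻¹(j_H(h) · j_A(a)). -/
def zetaF (jA : A →ₐc[k] X) (jH : H →ₐc[k] X) (ξ : (A ⊗[k] H) ≃ₗ[k] X) :
    H ⊗[k] A →ₗ[k] A ⊗[k] H :=
  ξ.symm.toLinearMap ∘ₗ LinearMap.mul' k X ∘ₗ
    TensorProduct.map (jH : H →ₗ[k] X) (jA : A →ₗ[k] X)

/-- α := (id_A ⊗ ε_H) ∘ ζ. -/
def alphaF (jA : A →ₐc[k] X) (jH : H →ₐc[k] X) (ξ : (A ⊗[k] H) ≃ₗ[k] X) :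
    H ⊗[k] A →ₗ[k] A :=
  (TensorProduct.rid k A).toLinearMap ∘ₗ
    TensorProduct.map LinearMap.id Coalgebra.counit ∘ₗ zetaF jA jH ξ

/-- β := (ε_A ⊗ id_H) ∘ ζ. -/
def betaF (jA : A →ₐc[k] X) (jH : H →ₐc[k] X) (ξ : (A ⊗[k] H) ≃ₗ[k] X) :
    H ⊗[k] A →ₗ[k] H :=
  (TensorProduct.lid k H).toLinearMap ∘ₗ
    TensorProduct.map Coalgebra.counit LinearMap.id ∘ₗ zetaF jA jH ξ

/-- matched-pair compatibility conditions for β: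
β(1_H ⊗ a) = ε_A(a)·1_H,
β(h h' ⊗ a) = Σ β(h ⊗ α(h'₁ ⊗ a₁))·β(h'₂ ⊗ a₂), and
Σ β(h₁ ⊗ a₁) ⊗ α(h₂ ⊗ a₂) = Σ β(h₂ ⊗ a₂) ⊗ α(h₁ ⊗ a₁),
where Σ (h₁ ⊗ a₁) ⊗ (h₂ ⊗ a₂) = Δ_{H⊗A}(h ⊗ a). -/
lemma aux_mu (f : A →ₗ[k] X) (g : H →ₗ[k] X) :
    LinearMap.mul' k (X ⊗[k] X) ∘ₗ
      TensorProduct.map (TensorProduct.map f f) (TensorProduct.map g g)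
    = TensorProduct.map (LinearMap.mul' k X ∘ₗ TensorProduct.map f g)
        (LinearMap.mul' k X ∘ₗ TensorProduct.map f g) ∘ₗ
      (TensorProduct.tensorTensorTensorComm k A A H H).toLinearMap := by
  ext a₁ a₂ h₁ h₂
  simp [Algebra.TensorProduct.tmul_mul_tmul]

lemma aux_theta_coalg (f : A →ₐc[k] X) (g : H →ₐc[k] X) :
    Coalgebra.comul ∘ₗ (LinearMap.mul' k X ∘ₗ
        TensorProduct.map (f : A →ₗ[k] X) (g : H →ₗ[k] X))
    = TensorProduct.map
        (LinearMap.mul' k X ∘ₗ TensorProduct.map (f : A →ₗ[k] X) (g : H →ₗ[k] X))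
        (LinearMap.mul' k X ∘ₗ TensorProduct.map (f : A →ₗ[k] X) (g : H →ₗ[k] X)) ∘ₗ
      (Coalgebra.comul (R := k) (A := A ⊗[k] H)) := by
  ext a h
  show Coalgebra.comul (R := k) (f a * g h)
    = TensorProduct.map
        (LinearMap.mul' k X ∘ₗ TensorProduct.map (f : A →ₗ[k] X) (g : H →ₗ[k] X))
        (LinearMap.mul' k X ∘ₗ TensorProduct.map (f : A →ₗ[k] X) (g : H →ₗ[k] X))
        (Coalgebra.comul (R := k) (a ⊗ₜ[k] h))
  have hc : Coalgebra.comul (R := k) (a ⊗ₜ[k] h) =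
      (TensorProduct.tensorTensorTensorComm k A A H H)
        ((Coalgebra.comul a) ⊗ₜ[k] (Coalgebra.comul h)) := rfl
  have key := LinearMap.congr_fun (aux_mu (k:=k) (f : A →ₗ[k] X) (g : H →ₗ[k] X))
    ((Coalgebra.comul a) ⊗ₜ[k] (Coalgebra.comul h))
  simp only [LinearMap.coe_comp, Function.comp_apply, TensorProduct.map_tmul,
    LinearMap.mul'_apply, LinearEquiv.coe_coe] at key
  rw [Bialgebra.comul_mul, ← CoalgHomClass.map_comp_comul_apply f a,
    ← CoalgHomClass.map_comp_comul_apply g h, hc]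
  exact key

variable (k A H) in
/-- P := (id ⊗ ε) : A⊗H → A -/
def Pmap : A ⊗[k] H →ₗ[k] A :=
  (TensorProduct.rid k A).toLinearMap ∘ₗ TensorProduct.map LinearMap.id Coalgebra.counit

variable (k A H) in
/-- Q := (ε ⊗ id) : A⊗H → H -/
def Qmap : A ⊗[k] H →ₗ[k] H :=
  (TensorProduct.lid k H).toLinearMap ∘ₗ TensorProduct.map Coalgebra.counit LinearMap.id

@[simp] lemma Pmap_tmul (a : A) (h : H) :
    Pmap k A H (a ⊗ₜ[k] h) = Coalgebra.counit (R := k) h • a := by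
  simp [Pmap, TensorProduct.smul_tmul']

@[simp] lemma Qmap_tmul (a : A) (h : H) :
    Qmap k A H (a ⊗ₜ[k] h) = Coalgebra.counit (R := k) a • h := by
  simp [Qmap]

/-- (P ⊗ Q) ∘ Δ_{A⊗H} = id -/
lemma aux_counit_id :
    TensorProduct.map (Pmap k A H) (Qmap k A H) ∘ₗ
      (Coalgebra.comul (R := k) (A := A ⊗[k] H)) = LinearMap.id := by
  have e : TensorProduct.map (Pmap k A H) (Qmap k A H) ∘ₗ
      (TensorProduct.tensorTensorTensorComm k A A H H).toLinearMap
      = TensorProduct.map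
          ((TensorProduct.rid k A).toLinearMap ∘ₗ
            LinearMap.lTensor A (Coalgebra.counit (R := k) (A := A)))
          ((TensorProduct.lid k H).toLinearMap ∘ₗ
            LinearMap.rTensor H (Coalgebra.counit (R := k) (A := H))) := by
    ext a₁ a₂ h₁ h₂
    simp only [TensorProduct.AlgebraTensorModule.curry_apply, TensorProduct.curry_apply,
      LinearMap.coe_restrictScalars, LinearMap.coe_comp, Function.comp_apply,
      LinearEquiv.coe_coe, TensorProduct.tensorTensorTensorComm_tmul, TensorProduct.map_tmul,
      LinearMap.lTensor_tmul, LinearMap.rTensor_tmul, TensorProduct.rid_tmul,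
      TensorProduct.lid_tmul, LinearMap.id_coe, id_eq, Pmap_tmul, Qmap_tmul,
      TensorProduct.comm_tmul]
    simp only [TensorProduct.smul_tmul, smul_smul]
    rw [mul_comm]
  ext a h
  show TensorProduct.map (Pmap k A H) (Qmap k A H)
      ((TensorProduct.tensorTensorTensorComm k A A H H)
        ((Coalgebra.comul a) ⊗ₜ[k] (Coalgebra.comul h))) = a ⊗ₜ[k] h
  have := LinearMap.congr_fun e ((Coalgebra.comul a) ⊗ₜ[k] (Coalgebra.comul h))
  simp only [LinearMap.coe_comp, Function.comp_apply, LinearEquiv.coe_coe,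
    TensorProduct.map_tmul] at this
  rw [this, Coalgebra.lTensor_counit_comul, Coalgebra.rTensor_counit_comul]
  simp

/-- (Q ⊗ P) ∘ Δ_{A⊗H} = comm -/
lemma aux_comm :
    TensorProduct.map (Qmap k A H) (Pmap k A H) ∘ₗ
      (Coalgebra.comul (R := k) (A := A ⊗[k] H))
    = (TensorProduct.comm k A H).toLinearMap := by
  have e : TensorProduct.map (Qmap k A H) (Pmap k A H) ∘ₗ
      (TensorProduct.tensorTensorTensorComm k A A H H).toLinearMap
      = (TensorProduct.comm k A H).toLinearMap ∘ₗ
        TensorProduct.map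
          ((TensorProduct.lid k A).toLinearMap ∘ₗ
            LinearMap.rTensor A (Coalgebra.counit (R := k) (A := A)))
          ((TensorProduct.rid k H).toLinearMap ∘ₗ
            LinearMap.lTensor H (Coalgebra.counit (R := k) (A := H))) := by
    ext a₁ a₂ h₁ h₂
    simp only [TensorProduct.AlgebraTensorModule.curry_apply, TensorProduct.curry_apply,
      LinearMap.coe_restrictScalars, LinearMap.coe_comp, Function.comp_apply,
      LinearEquiv.coe_coe, TensorProduct.tensorTensorTensorComm_tmul, TensorProduct.map_tmul,
      LinearMap.lTensor_tmul, LinearMap.rTensor_tmul, TensorProduct.rid_tmul,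
      TensorProduct.lid_tmul, LinearMap.id_coe, id_eq, Pmap_tmul, Qmap_tmul,
      TensorProduct.comm_tmul]
    simp only [TensorProduct.smul_tmul, smul_smul]
    rw [mul_comm]
  ext a h
  show TensorProduct.map (Qmap k A H) (Pmap k A H)
      ((TensorProduct.tensorTensorTensorComm k A A H H)
        ((Coalgebra.comul a) ⊗ₜ[k] (Coalgebra.comul h))) = h ⊗ₜ[k] a
  have := LinearMap.congr_fun e ((Coalgebra.comul a) ⊗ₜ[k] (Coalgebra.comul h))
  simp only [LinearMap.coe_comp, Function.comp_apply, LinearEquiv.coe_coe,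
    TensorProduct.map_tmul] at this
  rw [this, Coalgebra.lTensor_counit_comul, Coalgebra.rTensor_counit_comul]
  simp

section Zeta

variable (jA : A →ₐc[k] X) (jH : H →ₐc[k] X) (ξ : (A ⊗[k] H) ≃ₗ[k] X)

lemma alphaF_eq : alphaF jA jH ξ = Pmap k A H ∘ₗ zetaF jA jH ξ := rfl
lemma betaF_eq : betaF jA jH ξ = Qmap k A H ∘ₗ zetaF jA jH ξ := rfl

variable (hξ : ∀ (a : A) (h : H), ξ (a ⊗ₜ[k] h) = jA a * jH h)
include hξ

lemma xi_lm : ξ.toLinearMap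
    = LinearMap.mul' k X ∘ₗ TensorProduct.map (jA : A →ₗ[k] X) (jH : H →ₗ[k] X) := by
  ext a h
  show ξ (a ⊗ₜ[k] h) = jA a * jH h
  exact hξ a h

lemma comul_xi_symm : Coalgebra.comul ∘ₗ ξ.symm.toLinearMap
    = TensorProduct.map ξ.symm.toLinearMap ξ.symm.toLinearMap ∘ₗ Coalgebra.comul := by
  have cx : Coalgebra.comul ∘ₗ ξ.toLinearMap
      = TensorProduct.map ξ.toLinearMap ξ.toLinearMap ∘ₗ
          (Coalgebra.comul (R := k) (A := A ⊗[k] H)) := by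
    rw [xi_lm jA jH ξ hξ]; exact aux_theta_coalg jA jH
  apply LinearMap.ext; intro y
  have h1 := LinearMap.congr_fun cx (ξ.symm y)
  simp only [LinearMap.coe_comp, Function.comp_apply, LinearEquiv.coe_coe,
    LinearEquiv.apply_symm_apply] at h1 ⊢
  rw [h1, ← LinearMap.comp_apply, ← TensorProduct.map_comp]
  have hid : ξ.symm.toLinearMap ∘ₗ ξ.toLinearMap = LinearMap.id := by
    ext x; simp
  rw [hid, TensorProduct.map_id, LinearMap.id_apply]

lemma zeta_coalg : Coalgebra.comul ∘ₗ zetaF jA jH ξ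
    = TensorProduct.map (zetaF jA jH ξ) (zetaF jA jH ξ) ∘ₗ
        (Coalgebra.comul (R := k) (A := H ⊗[k] A)) := by
  have ct := aux_theta_coalg jH jA
  unfold zetaF
  calc Coalgebra.comul ∘ₗ ξ.symm.toLinearMap ∘ₗ LinearMap.mul' k X ∘ₗ
        TensorProduct.map (jH : H →ₗ[k] X) (jA : A →ₗ[k] X)
      = (Coalgebra.comul ∘ₗ ξ.symm.toLinearMap) ∘ₗ (LinearMap.mul' k X ∘ₗ
        TensorProduct.map (jH : H →ₗ[k] X) (jA : A →ₗ[k] X)) := by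
        rw [LinearMap.comp_assoc]
    _ = TensorProduct.map ξ.symm.toLinearMap ξ.symm.toLinearMap ∘ₗ
        (Coalgebra.comul ∘ₗ (LinearMap.mul' k X ∘ₗ
          TensorProduct.map (jH : H →ₗ[k] X) (jA : A →ₗ[k] X))) := by
        rw [comul_xi_symm jA jH ξ hξ, LinearMap.comp_assoc]
    _ = TensorProduct.map ξ.symm.toLinearMap ξ.symm.toLinearMap ∘ₗ
        (TensorProduct.map
          (LinearMap.mul' k X ∘ₗ TensorProduct.map (jH : H →ₗ[k] X) (jA : A →ₗ[k] X))
          (LinearMap.mul' k X ∘ₗ TensorProduct.map (jH : H →ₗ[k] X) (jA : A →ₗ[k] X)) ∘ₗ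
          (Coalgebra.comul (R := k) (A := H ⊗[k] A))) := by rw [ct]
    _ = TensorProduct.map
          (ξ.symm.toLinearMap ∘ₗ LinearMap.mul' k X ∘ₗ
            TensorProduct.map (jH : H →ₗ[k] X) (jA : A →ₗ[k] X))
          (ξ.symm.toLinearMap ∘ₗ LinearMap.mul' k X ∘ₗ
            TensorProduct.map (jH : H →ₗ[k] X) (jA : A →ₗ[k] X)) ∘ₗ
          (Coalgebra.comul (R := k) (A := H ⊗[k] A)) := by
        rw [← LinearMap.comp_assoc, ← TensorProduct.map_comp]

lemma zab : TensorProduct.map (alphaF jA jH ξ) (betaF jA jH ξ) ∘ₗ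
    (Coalgebra.comul (R := k) (A := H ⊗[k] A)) = zetaF jA jH ξ := by
  rw [alphaF_eq, betaF_eq, TensorProduct.map_comp, LinearMap.comp_assoc,
    ← zeta_coalg jA jH ξ hξ, ← LinearMap.comp_assoc, aux_counit_id, LinearMap.id_comp]

lemma zqp : TensorProduct.map (betaF jA jH ξ) (alphaF jA jH ξ) ∘ₗ
    (Coalgebra.comul (R := k) (A := H ⊗[k] A))
    = (TensorProduct.comm k A H).toLinearMap ∘ₗ zetaF jA jH ξ := by
  rw [alphaF_eq, betaF_eq, TensorProduct.map_comp, LinearMap.comp_assoc,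
    ← zeta_coalg jA jH ξ hξ, ← LinearMap.comp_assoc, aux_comm]

end Zeta

variable (k A H) in
/-- Ψ : (A⊗H)⊗H → A⊗H, (w ⊗ h) ↦ (id ⊗ ·h) w -/
def PsiM : (A ⊗[k] H) ⊗[k] H →ₗ[k] A ⊗[k] H :=
  TensorProduct.map LinearMap.id (LinearMap.mul' k H) ∘ₗ
    (TensorProduct.assoc k A H H).toLinearMap

section Zeta2

variable (jA : A →ₐc[k] X) (jH : H →ₐc[k] X) (ξ : (A ⊗[k] H) ≃ₗ[k] X)
  (hξ : ∀ (a : A) (h : H), ξ (a ⊗ₜ[k] h) = jA a * jH h)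

include hξ in
lemma aux_RM : ξ.toLinearMap ∘ₗ PsiM k A H
    = LinearMap.mul' k X ∘ₗ TensorProduct.map ξ.toLinearMap (jH : H →ₗ[k] X) := by
  ext a g h''
  show ξ (TensorProduct.map LinearMap.id (LinearMap.mul' k H)
      ((TensorProduct.assoc k A H H) ((a ⊗ₜ[k] g) ⊗ₜ[k] h''))) = ξ (a ⊗ₜ[k] g) * jH h''
  simp only [TensorProduct.assoc_tmul, TensorProduct.map_tmul, LinearMap.id_coe, id_eq,
    LinearMap.mul'_apply]
  rw [hξ, hξ, map_mul, mul_assoc]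

include hξ in
lemma aux_ZMh (h : H) :
    ξ.toLinearMap ∘ₗ PsiM k A H ∘ₗ
      TensorProduct.map (zetaF jA jH ξ ∘ₗ TensorProduct.mk k H A h) (LinearMap.id : H →ₗ[k] H)
    = LinearMap.mulLeft k (jH h) ∘ₗ ξ.toLinearMap := by
  ext a' g
  show ξ (PsiM k A H ((zetaF jA jH ξ (h ⊗ₜ[k] a')) ⊗ₜ[k] g)) = jH h * ξ (a' ⊗ₜ[k] g)
  have e1 := LinearMap.congr_fun (aux_RM jA jH ξ hξ) ((zetaF jA jH ξ (h ⊗ₜ[k] a')) ⊗ₜ[k] g)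
  simp only [LinearMap.coe_comp, Function.comp_apply, LinearEquiv.coe_coe,
    TensorProduct.map_tmul, LinearMap.mul'_apply, LinearMap.id_coe, id_eq] at e1
  rw [e1]
  have e2 : ξ (zetaF jA jH ξ (h ⊗ₜ[k] a')) = jH h * jA a' := by
    show ξ (ξ.symm _) = _
    rw [LinearEquiv.apply_symm_apply]
    simp
  rw [e2, hξ, mul_assoc]
  rfl

end Zeta2

lemma aux_QPsi : Qmap k A H ∘ₗ PsiM k A H
    = LinearMap.mul' k H ∘ₗ TensorProduct.map (Qmap k A H) LinearMap.id := by
  ext a g h''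
  show Qmap k A H (TensorProduct.map LinearMap.id (LinearMap.mul' k H)
      ((TensorProduct.assoc k A H H) ((a ⊗ₜ[k] g) ⊗ₜ[k] h'')))
    = LinearMap.mul' k H (TensorProduct.map (Qmap k A H) LinearMap.id ((a ⊗ₜ[k] g) ⊗ₜ[k] h''))
  simp [smul_mul_assoc]


theorem beta_matched_pair (jA : A →ₐc[k] X) (jH : H →ₐc[k] X)
    (ξ : (A ⊗[k] H) ≃ₗ[k] X)
    (hξ : ∀ (a : A) (h : H), ξ (a ⊗ₜ[k] h) = jA a * jH h) :
    ∀ (h h' : H) (a : A),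
      betaF jA jH ξ ((1 : H) ⊗ₜ[k] a) = Coalgebra.counit (R := k) a • (1 : H) ∧
      betaF jA jH ξ ((h * h') ⊗ₜ[k] a)
        = LinearMap.mul' k H
            (TensorProduct.map
              (betaF jA jH ξ ∘ₗ TensorProduct.mk k H A h ∘ₗ alphaF jA jH ξ)
              (betaF jA jH ξ)
              (Coalgebra.comul (R := k) (h' ⊗ₜ[k] a))) ∧
      TensorProduct.map (betaF jA jH ξ) (alphaF jA jH ξ)
          (Coalgebra.comul (R := k) (h ⊗ₜ[k] a))
        = TensorProduct.comm k A H
            (TensorProduct.map (alphaF jA jH ξ) (betaF jA jH ξ)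
              (Coalgebra.comul (R := k) (h ⊗ₜ[k] a))) := by
  intro h h' a
  refine ⟨?_, ?_, ?_⟩
  · -- β(1 ⊗ a) = ε(a) • 1
    have hz1 : zetaF jA jH ξ ((1 : H) ⊗ₜ[k] a) = a ⊗ₜ[k] (1 : H) := by
      have h1 : zetaF jA jH ξ ((1 : H) ⊗ₜ[k] a) = ξ.symm (jH 1 * jA a) := rfl
      rw [h1, map_one, one_mul, LinearEquiv.symm_apply_eq, hξ, map_one, mul_one]
    rw [betaF_eq, LinearMap.comp_apply, hz1, Qmap_tmul]
  · -- multiplicativity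
    have hζmul : zetaF jA jH ξ ((h * h') ⊗ₜ[k] a)
        = PsiM k A H (TensorProduct.map
            (zetaF jA jH ξ ∘ₗ TensorProduct.mk k H A h) (LinearMap.id : H →ₗ[k] H)
            (zetaF jA jH ξ (h' ⊗ₜ[k] a))) := by
      apply ξ.injective
      have e1 := LinearMap.congr_fun (aux_ZMh jA jH ξ hξ h) (zetaF jA jH ξ (h' ⊗ₜ[k] a))
      simp only [LinearMap.coe_comp, Function.comp_apply, LinearEquiv.coe_coe,
        LinearMap.mulLeft_apply] at e1
      rw [e1]
      have e2 : ξ (zetaF jA jH ξ ((h * h') ⊗ₜ[k] a)) = jH (h * h') * jA a := by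
        show ξ (ξ.symm _) = _
        rw [LinearEquiv.apply_symm_apply]; simp
      have e3 : ξ (zetaF jA jH ξ (h' ⊗ₜ[k] a)) = jH h' * jA a := by
        show ξ (ξ.symm _) = _
        rw [LinearEquiv.apply_symm_apply]; simp
      rw [e2, e3, map_mul, mul_assoc]
    -- LHS
    have e4 := LinearMap.congr_fun aux_QPsi (TensorProduct.map
      (zetaF jA jH ξ ∘ₗ TensorProduct.mk k H A h) (LinearMap.id : H →ₗ[k] H)
      (zetaF jA jH ξ (h' ⊗ₜ[k] a)))
    simp only [LinearMap.coe_comp, Function.comp_apply] at e4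
    have lhs : betaF jA jH ξ ((h * h') ⊗ₜ[k] a)
        = LinearMap.mul' k H (TensorProduct.map
            (Qmap k A H ∘ₗ zetaF jA jH ξ ∘ₗ TensorProduct.mk k H A h) LinearMap.id
            (zetaF jA jH ξ (h' ⊗ₜ[k] a))) := by
      rw [betaF_eq, LinearMap.comp_apply, hζmul, e4]
      congr 1
      rw [← LinearMap.comp_apply, ← TensorProduct.map_comp, LinearMap.id_comp]
    -- RHS
    have hmap : TensorProduct.map
          (betaF jA jH ξ ∘ₗ TensorProduct.mk k H A h ∘ₗ alphaF jA jH ξ) (betaF jA jH ξ)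
        = TensorProduct.map
            (Qmap k A H ∘ₗ zetaF jA jH ξ ∘ₗ TensorProduct.mk k H A h) LinearMap.id ∘ₗ
          TensorProduct.map (alphaF jA jH ξ) (betaF jA jH ξ) := by
      rw [← TensorProduct.map_comp, LinearMap.id_comp]
      congr 1
    have r2 := LinearMap.congr_fun (zab jA jH ξ hξ) (h' ⊗ₜ[k] a)
    simp only [LinearMap.coe_comp, Function.comp_apply] at r2
    rw [hmap, LinearMap.comp_apply, r2]
    exact lhs
  · -- cosymmetry
    have l := LinearMap.congr_fun (zqp jA jH ξ hξ) (h ⊗ₜ[k] a)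
    have r := LinearMap.congr_fun (zab jA jH ξ hξ) (h ⊗ₜ[k] a)
    simp only [LinearMap.coe_comp, Function.comp_apply, LinearEquiv.coe_coe] at l r
    rw [l, r]
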